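/- arXiv:cs/0602077 — 3 statements merged into one kernel-verified Lean document; each statement's English description precedes it below -/
import Mathlib

section
/- Two V-categories A and B are bisimilar if and only if there exists a cospan A → C ← B of surjective functional bisimulations. -/
/-- A quantaloid: a (small) locally ordered bicategory whose hom-posets are
complete lattices and whose composition preserves suprema in each variable. -/
structure Quantaloid where
  Obj : Type
  Hom : Obj → Obj → Type
  [lat : ∀ u v : Obj, CompleteLattice (Hom u v)]
  comp : ∀ {u v w : Obj}, Hom u v → Hom v w → Hom u w
  id : ∀ u : Obj, Hom u u
  comp_assoc : ∀ {u v w x : Obj} (f : Hom u v) (g : Hom v w) (h : Hom w x),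
    comp (comp f g) h = comp f (comp g h)
  id_comp : ∀ {u v : Obj} (f : Hom u v), comp (id u) f = f
  comp_id : ∀ {u v : Obj} (f : Hom u v), comp f (id v) = f
  comp_sSup_left : ∀ {u v w : Obj} (S : Set (Hom u v)) (g : Hom v w),
    comp (sSup S) g = sSup ((fun f => comp f g) '' S)
  comp_sSup_right : ∀ {u v w : Obj} (f : Hom u v) (S : Set (Hom v w)),
    comp f (sSup S) = sSup ((fun g => comp f g) '' S)

attribute [instance] Quantaloid.lat

/-- Transport of homs along equalities of objects. -/
def Quantaloid.cast (V : Quantaloid) {u u' v v' : V.Obj} (hu : u = u') (hv : v = v')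
    (f : V.Hom u v) : V.Hom u' v' := hu ▸ hv ▸ f

/-- A `V`-category. -/
structure VCat (V : Quantaloid) where
  Obj : Type
  pt : Obj → V.Obj
  hom : ∀ a b : Obj, V.Hom (pt a) (pt b)
  id_le : ∀ a, V.id (pt a) ≤ hom a a
  comp_le : ∀ a b c, V.comp (hom a b) (hom b c) ≤ hom a c

/-- A simulation from `A` to `B`. -/
def IsSimulation (V : Quantaloid) (A B : VCat V) (R : A.Obj → B.Obj → Prop) : Prop :=
  (∀ a b, R a b → A.pt a = B.pt b) ∧
  ∀ (a : A.Obj) (b : B.Obj), R a b → ∀ (a' : A.Obj) (h : A.pt a = B.pt b),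
    V.cast h rfl (A.hom a a') ≤
      sSup {x : V.Hom (B.pt b) (A.pt a') |
        ∃ (b' : B.Obj) (h' : A.pt a' = B.pt b'), R a' b' ∧ x = V.cast rfl h'.symm (B.hom b b')}

/-- A bisimulation from `A` to `B`. -/
def IsBisimulation (V : Quantaloid) (A B : VCat V) (R : A.Obj → B.Obj → Prop) : Prop :=
  IsSimulation V A B R ∧ IsSimulation V B A (fun b a => R a b)

/-- Bisimilarity of `V`-categories. -/
def Bisimilar (V : Quantaloid) (A B : VCat V) : Prop :=
  ∃ R, IsBisimulation V A B R ∧ (∀ a, ∃ b, R a b) ∧ (∀ b, ∃ a, R a b)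

/-- A `V`-functor. -/
structure VFunctor (V : Quantaloid) (A B : VCat V) where
  toFun : A.Obj → B.Obj
  pt_eq : ∀ a, B.pt (toFun a) = A.pt a
  map_le : ∀ a a',
    V.cast (pt_eq a).symm (pt_eq a').symm (A.hom a a') ≤ B.hom (toFun a) (toFun a')

/-- A surjective functional bisimulation (an "open" map). -/
def VFunctor.IsSFB {V : Quantaloid} {A B : VCat V} (f : VFunctor V A B) : Prop :=
  Function.Surjective f.toFun ∧
  ∀ (a : A.Obj) (b : B.Obj),
    B.hom (f.toFun a) b =
      sSup {x : V.Hom (B.pt (f.toFun a)) (B.pt b) |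
        ∃ (a' : A.Obj) (h : f.toFun a' = b),
          x = V.cast (f.pt_eq a).symm ((f.pt_eq a').symm.trans (congrArg B.pt h)) (A.hom a a')}

/-!
From a total bisimulation `R`, glue `A` and `B` along the equivalence relation generated by `R`
on the disjoint sum `A ⊔ B` (whose hom-objects between the two summands are `⊥`). The
bisimulation property propagates along zigzags, so the join `⋁_{z ∈ [y]} (A ⊔ B)(x, z)` does
not depend on the representative `x` of `[x]`; taking it as the hom-object `C([x], [y])` of the
quotient `C` makes the projection `A ⊔ B → C` a functional bisimulation, and its restrictions to
`A` and `B` are surjective because `R` is total. Conversely, for a cospan `p, q` of surjective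
functional bisimulations the relation `p a = q b` is a total bisimulation.
-/

open Relation

namespace Quantaloid

variable {V : Quantaloid} {u u' u'' v v' v'' w w' : V.Obj}

@[simp] protected lemma cast_cast (hu : u = u') (hv : v = v') (hu' : u' = u'') (hv' : v' = v'')
    (f : V.Hom u v) :
    V.cast hu' hv' (V.cast hu hv f) = V.cast (hu.trans hu') (hv.trans hv') f := by
  subst hu hv hu' hv'; rfl

lemma cast_mono (hu : u = u') (hv : v = v') : Monotone (V.cast hu hv) := by
  subst hu hv; exact monotone_id

lemma cast_le_iff (hu : u = u') (hv : v = v') (f : V.Hom u v) (g : V.Hom u' v') :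
    V.cast hu hv f ≤ g ↔ f ≤ V.cast hu.symm hv.symm g := by
  subst hu hv; rfl

lemma cast_eq_iff (hu : u = u') (hv : v = v') (f : V.Hom u v) (g : V.Hom u' v') :
    V.cast hu hv f = g ↔ f = V.cast hu.symm hv.symm g := by
  subst hu hv; rfl

@[simp] lemma cast_bot (hu : u = u') (hv : v = v') : V.cast hu hv (⊥ : V.Hom u v) = ⊥ := by
  subst hu hv; rfl

lemma cast_sSup (hu : u = u') (hv : v = v') (S : Set (V.Hom u v)) :
    V.cast hu hv (sSup S) = sSup (V.cast hu hv '' S) := by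
  subst hu hv; exact congrArg sSup (Set.image_id' S).symm

lemma comp_cast_cast (hu : u = u') (hv : v = v') (hw : w = w') (f : V.Hom u v)
    (g : V.Hom v w) : V.comp (V.cast hu hv f) (V.cast hv hw g) = V.cast hu hw (V.comp f g) := by
  subst hu hv hw; rfl

@[simp] protected lemma comp_bot (f : V.Hom u v) : V.comp f (⊥ : V.Hom v w) = ⊥ := by
  simpa using V.comp_sSup_right f ∅

@[simp] protected lemma bot_comp (g : V.Hom v w) : V.comp (⊥ : V.Hom u v) g = ⊥ := by
  simpa using V.comp_sSup_left ∅ g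

end Quantaloid

open Quantaloid

namespace VCat

variable {V : Quantaloid} (X : VCat V)

def homToSet (x : X.Obj) (Z : Set X.Obj) (v : V.Obj) : V.Hom (X.pt x) v :=
  sSup {f | ∃ z ∈ Z, ∃ h : X.pt z = v, f = V.cast rfl h (X.hom x z)}

variable {X} {x z : X.Obj} {Z Z' : Set X.Obj} {v v' w : V.Obj}

lemma cast_hom_le_homToSet (hz : z ∈ Z) (h : X.pt z = v) :
    V.cast rfl h (X.hom x z) ≤ X.homToSet x Z v :=
  le_sSup ⟨z, hz, h, rfl⟩

lemma homToSet_le_iff {g : V.Hom (X.pt x) v} :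
    X.homToSet x Z v ≤ g ↔ ∀ z ∈ Z, ∀ h : X.pt z = v, V.cast rfl h (X.hom x z) ≤ g := by
  simp only [homToSet, sSup_le_iff]
  exact ⟨fun H z hz h => H _ ⟨z, hz, h, rfl⟩, fun H _ ⟨z, hz, h, hf⟩ => hf ▸ H z hz h⟩

lemma homToSet_mono (hZ : Z ⊆ Z') : X.homToSet x Z v ≤ X.homToSet x Z' v :=
  homToSet_le_iff.2 fun _ hz h => cast_hom_le_homToSet (hZ hz) h

@[simp] lemma cast_homToSet (h : v = v') :
    V.cast rfl h (X.homToSet x Z v) = X.homToSet x Z v' := by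
  subst h; rfl

lemma hom_comp_homToSet_le :
    V.comp (X.hom x z) (X.homToSet z Z w) ≤ X.homToSet x Z w := by
  rw [homToSet, V.comp_sSup_right]
  refine sSup_le ?_
  rintro _ ⟨_, ⟨z', hz', h, rfl⟩, rfl⟩
  calc V.comp (X.hom x z) (V.cast rfl h (X.hom z z'))
      = V.cast rfl h (V.comp (X.hom x z) (X.hom z z')) := comp_cast_cast rfl rfl h _ _
    _ ≤ V.cast rfl h (X.hom x z') := cast_mono rfl h (X.comp_le x z z')
    _ ≤ X.homToSet x Z w := cast_hom_le_homToSet hz' h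

end VCat

open VCat

variable {V : Quantaloid}

lemma isSimulation_iff {A B : VCat V} {R : A.Obj → B.Obj → Prop} :
    IsSimulation V A B R ↔ (∀ a b, R a b → A.pt a = B.pt b) ∧
      ∀ a b, R a b → ∀ a' (h : A.pt a = B.pt b),
        V.cast h rfl (A.hom a a') ≤ B.homToSet b {b' | R a' b'} (A.pt a') := by
  have hset : ∀ a' b, {x : V.Hom (B.pt b) (A.pt a') |
      ∃ (b' : B.Obj) (h' : A.pt a' = B.pt b'), R a' b' ∧ x = V.cast rfl h'.symm (B.hom b b')} =
      {f | ∃ b' ∈ {b' | R a' b'}, ∃ h : B.pt b' = A.pt a',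
        f = V.cast rfl h (B.hom b b')} := by
    intro a' b
    ext f
    exact ⟨fun ⟨b', h', hR, hf⟩ => ⟨b', hR, h'.symm, hf⟩,
      fun ⟨b', hR, h, hf⟩ => ⟨b', h.symm, hR, hf⟩⟩
  simp only [IsSimulation, hset, homToSet]

def VFunctor.IsFunctionalBisimulation {A B : VCat V} (f : VFunctor V A B) : Prop :=
  ∀ a b, V.cast (f.pt_eq a) rfl (B.hom (f.toFun a) b) =
    A.homToSet a {a' | f.toFun a' = b} (B.pt b)

lemma VFunctor.isSFB_iff {A B : VCat V} (f : VFunctor V A B) :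
    f.IsSFB ↔ Function.Surjective f.toFun ∧ f.IsFunctionalBisimulation := by
  refine and_congr_right' (forall₂_congr fun a b => ?_)
  rw [cast_eq_iff, homToSet, cast_sSup]
  refine Eq.congr_right (congrArg sSup (Set.ext fun g => ?_))
  constructor
  · rintro ⟨a', h, rfl⟩
    exact ⟨_, ⟨a', h, h ▸ (f.pt_eq a').symm, rfl⟩, by simp⟩
  · rintro ⟨_, ⟨a', h, -, rfl⟩, rfl⟩
    exact ⟨a', h, by simp⟩

namespace IsSimulation

variable {X : VCat V} {S : X.Obj → X.Obj → Prop}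

lemma pt_eq (hS : IsSimulation V X X S) {x x' : X.Obj} (h : S x x') : X.pt x = X.pt x' :=
  hS.1 x x' h

lemma cast_homToSet_le (hS : IsSimulation V X X S) {Z : Set X.Obj}
    (hZ : ∀ ⦃z z'⦄, S z z' → z ∈ Z → z' ∈ Z) {x x' : X.Obj} (hxx' : S x x')
    (h : X.pt x = X.pt x') (v : V.Obj) :
    V.cast h rfl (X.homToSet x Z v) ≤ X.homToSet x' Z v := by
  rw [homToSet, cast_sSup]
  refine sSup_le ?_
  rintro _ ⟨_, ⟨z, hz, hzv, rfl⟩, rfl⟩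
  calc V.cast h rfl (V.cast rfl hzv (X.hom x z))
      = V.cast rfl hzv (V.cast h rfl (X.hom x z)) := by simp
    _ ≤ V.cast rfl hzv (X.homToSet x' {z' | S z z'} (X.pt z)) :=
        cast_mono rfl hzv ((isSimulation_iff.1 hS).2 x x' hxx' z h)
    _ ≤ X.homToSet x' Z v := by
        rw [cast_homToSet]; exact homToSet_mono fun _ hz' => hZ hz' hz

lemma reflTransGen (hS : IsSimulation V X X S) : IsSimulation V X X (ReflTransGen S) := by
  have hpt : ∀ x x', ReflTransGen S x x' → X.pt x = X.pt x' := fun x x' h => by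
    induction h with
    | refl => rfl
    | tail _ hyx' ih => exact ih.trans (hS.pt_eq hyx')
  refine isSimulation_iff.2 ⟨hpt, fun x x' hxx' z h => ?_⟩
  induction hxx' with
  | refl => exact cast_hom_le_homToSet ReflTransGen.refl rfl
  | @tail y x' hxy hyx' ih =>
    calc V.cast h rfl (X.hom x z)
        = V.cast (hS.pt_eq hyx') rfl (V.cast (hpt x y hxy) rfl (X.hom x z)) := by simp
      _ ≤ V.cast (hS.pt_eq hyx') rfl (X.homToSet y {z' | ReflTransGen S z z'} (X.pt z)) :=
          cast_mono _ _ (ih _)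
      _ ≤ X.homToSet x' {z' | ReflTransGen S z z'} (X.pt z) :=
          hS.cast_homToSet_le (fun _ _ h hz => hz.tail h) hyx' _ _

end IsSimulation

lemma IsBisimulation.isSimulation_symmGen {X : VCat V} {S : X.Obj → X.Obj → Prop}
    (hS : IsBisimulation V X X S) : IsSimulation V X X (SymmGen S) := by
  obtain ⟨hpt, hfwd⟩ := isSimulation_iff.1 hS.1
  obtain ⟨hpt', hbwd⟩ := isSimulation_iff.1 hS.2
  refine isSimulation_iff.2 ⟨fun x x' h => h.elim (hpt x x') (hpt' x x'), ?_⟩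
  rintro x x' (h | h) z hxx'
  · exact (hfwd x x' h z hxx').trans (homToSet_mono fun _ => .inl)
  · exact (hbwd x x' h z hxx').trans (homToSet_mono fun _ => .inr)

lemma IsSimulation.homToSet_eq_cast {X : VCat V} {E : Setoid X.Obj}
    (hE : IsSimulation V X X E) {Z : Set X.Obj}
    (hZ : ∀ ⦃z z'⦄, E z z' → z ∈ Z → z' ∈ Z) {x x' : X.Obj} (hxx' : E x x')
    (h : X.pt x = X.pt x') (v : V.Obj) :
    X.homToSet x' Z v = V.cast h rfl (X.homToSet x Z v) :=
  le_antisymm ((cast_le_iff _ _ _ _).1 (hE.cast_homToSet_le hZ (E.symm hxx') h.symm v))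
    (hE.cast_homToSet_le hZ hxx' h v)

lemma Quotient.mem_setOf_mk_eq_of_rel {α : Type*} {E : Setoid α} {Q : Quotient E} {z z' : α}
    (h : E z z') (hz : z ∈ {z | Quotient.mk E z = Q}) : z' ∈ {z | Quotient.mk E z = Q} :=
  (Quotient.sound h).symm.trans hz

namespace VCat

variable (X : VCat V) (E : Setoid X.Obj)

noncomputable def quotient (hE : IsSimulation V X X E) : VCat V where
  Obj := Quotient E
  pt Q := X.pt Q.out
  hom Q Q' := X.homToSet Q.out {z | Quotient.mk E z = Q'} (X.pt Q'.out)
  id_le Q := (X.id_le Q.out).trans (cast_hom_le_homToSet Q.out_eq rfl)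
  comp_le Q Q' Q'' := by
    rw [homToSet, V.comp_sSup_left]
    refine sSup_le ?_
    rintro _ ⟨_, ⟨z, hz, h, rfl⟩, rfl⟩
    beta_reduce
    have hzQ' : E z Q'.out := Quotient.exact (hz.trans Q'.out_eq.symm)
    rw [hE.homToSet_eq_cast (fun _ _ => Quotient.mem_setOf_mk_eq_of_rel) hzQ' h, comp_cast_cast]
    exact hom_comp_homToSet_le

noncomputable def quotientMk (hE : IsSimulation V X X E) : VFunctor V X (X.quotient E hE) where
  toFun := Quotient.mk E
  pt_eq x := hE.pt_eq (Quotient.mk_out x)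
  map_le x x' := by
    have hx : E x (Quotient.mk E x).out := E.symm (Quotient.mk_out x)
    calc V.cast _ _ (X.hom x x')
        = V.cast (hE.pt_eq hx) rfl
            (V.cast rfl (hE.pt_eq (Quotient.mk_out x')).symm (X.hom x x')) := by simp
      _ ≤ V.cast (hE.pt_eq hx) rfl
            (X.homToSet x {z | Quotient.mk E z = Quotient.mk E x'} (X.pt (Quotient.mk E x').out)) :=
          cast_mono _ _ <|
            cast_hom_le_homToSet (Z := {z | Quotient.mk E z = Quotient.mk E x'}) rfl _
      _ ≤ _ := hE.cast_homToSet_le (fun _ _ => Quotient.mem_setOf_mk_eq_of_rel) hx _ _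

lemma isFunctionalBisimulation_quotientMk (hE : IsSimulation V X X E) :
    (X.quotientMk E hE).IsFunctionalBisimulation := by
  intro x (Y : Quotient E)
  have hx : E x (Quotient.mk E x).out := E.symm (Quotient.mk_out x)
  show V.cast _ rfl (X.homToSet (Quotient.mk E x).out {z | Quotient.mk E z = Y} (X.pt Y.out)) =
    X.homToSet x {z | Quotient.mk E z = Y} (X.pt Y.out)
  rw [hE.homToSet_eq_cast (fun _ _ => Quotient.mem_setOf_mk_eq_of_rel) hx (hE.pt_eq hx)]
  exact (Quantaloid.cast_cast _ _ _ _ _).trans rfl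

def sum (A B : VCat V) : VCat V where
  Obj := A.Obj ⊕ B.Obj
  pt := Sum.elim A.pt B.pt
  hom
    | .inl a, .inl a' => A.hom a a'
    | .inr b, .inr b' => B.hom b b'
    | .inl _, .inr _ => ⊥
    | .inr _, .inl _ => ⊥
  id_le
    | .inl a => A.id_le a
    | .inr b => B.id_le b
  comp_le x y z := by
    rcases x with a | b <;> rcases y with a' | b' <;> rcases z with a'' | b'' <;>
      first
      | exact A.comp_le _ _ _
      | exact B.comp_le _ _ _
      | exact (Quantaloid.comp_bot _).trans_le bot_le
      | exact (Quantaloid.bot_comp _).trans_le bot_le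

variable {A B : VCat V}

lemma homToSet_sum_inl (a : A.Obj) (Z : Set (A.Obj ⊕ B.Obj)) (v : V.Obj) :
    (A.sum B).homToSet (.inl a) Z v = A.homToSet a (Sum.inl ⁻¹' Z) v := by
  refine le_antisymm (homToSet_le_iff.2 ?_)
    (homToSet_le_iff.2 fun a' ha' h => cast_hom_le_homToSet (X := A.sum B) (x := .inl a) ha' h)
  rintro (a' | b') hz h
  · exact cast_hom_le_homToSet (X := A) hz h
  · exact (cast_bot _ _).trans_le bot_le

lemma homToSet_sum_inr (b : B.Obj) (Z : Set (A.Obj ⊕ B.Obj)) (v : V.Obj) :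
    (A.sum B).homToSet (.inr b) Z v = B.homToSet b (Sum.inr ⁻¹' Z) v := by
  refine le_antisymm (homToSet_le_iff.2 ?_)
    (homToSet_le_iff.2 fun b' hb' h => cast_hom_le_homToSet (X := A.sum B) (x := .inr b) hb' h)
  rintro (a' | b') hz h
  · exact (cast_bot _ _).trans_le bot_le
  · exact cast_hom_le_homToSet (X := B) hz h

end VCat

namespace VFunctor

variable {A B C : VCat V}

def inl : VFunctor V A (A.sum B) := ⟨Sum.inl, fun _ => rfl, fun _ _ => le_rfl⟩

def inr : VFunctor V B (A.sum B) := ⟨Sum.inr, fun _ => rfl, fun _ _ => le_rfl⟩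

def comp (g : VFunctor V B C) (f : VFunctor V A B) : VFunctor V A C where
  toFun := g.toFun ∘ f.toFun
  pt_eq a := (g.pt_eq (f.toFun a)).trans (f.pt_eq a)
  map_le a a' :=
    calc V.cast _ _ (A.hom a a')
        = V.cast (g.pt_eq _).symm (g.pt_eq _).symm
            (V.cast (f.pt_eq a).symm (f.pt_eq a').symm (A.hom a a')) := by simp
      _ ≤ V.cast _ _ (B.hom (f.toFun a) (f.toFun a')) := cast_mono _ _ (f.map_le a a')
      _ ≤ _ := g.map_le _ _

lemma IsFunctionalBisimulation.comp_inl {g : VFunctor V (A.sum B) C}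
    (hg : g.IsFunctionalBisimulation) : (g.comp inl).IsFunctionalBisimulation :=
  fun a c => (hg (.inl a) c).trans (homToSet_sum_inl a _ _)

lemma IsFunctionalBisimulation.comp_inr {g : VFunctor V (A.sum B) C}
    (hg : g.IsFunctionalBisimulation) : (g.comp inr).IsFunctionalBisimulation :=
  fun b c => (hg (.inr b) c).trans (homToSet_sum_inr b _ _)

end VFunctor

def sumRel {α β : Type*} (R : α → β → Prop) : α ⊕ β → α ⊕ β → Prop
  | .inl a, .inr b => R a b
  | _, _ => False

lemma surjective_mk_inl {α β : Type*} {R : α → β → Prop} (hR : ∀ b, ∃ a, R a b) :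
    Function.Surjective fun a => Quotient.mk (EqvGen.setoid (sumRel R)) (.inl a) := by
  rintro ⟨a | b⟩
  · exact ⟨a, rfl⟩
  · obtain ⟨a, hab⟩ := hR b
    exact ⟨a, Quotient.sound (EqvGen.rel _ _ hab)⟩

lemma surjective_mk_inr {α β : Type*} {R : α → β → Prop} (hR : ∀ a, ∃ b, R a b) :
    Function.Surjective fun b => Quotient.mk (EqvGen.setoid (sumRel R)) (.inr b) := by
  rintro ⟨a | b⟩
  · obtain ⟨b, hab⟩ := hR a
    exact ⟨b, Quotient.sound (EqvGen.symm _ _ (EqvGen.rel _ _ hab))⟩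
  · exact ⟨b, rfl⟩

lemma IsBisimulation.sumRel {A B : VCat V} {R : A.Obj → B.Obj → Prop}
    (hR : IsBisimulation V A B R) : IsBisimulation V (A.sum B) (A.sum B) (sumRel R) := by
  obtain ⟨hpt, hfwd⟩ := isSimulation_iff.1 hR.1
  obtain ⟨-, hbwd⟩ := isSimulation_iff.1 hR.2
  refine ⟨isSimulation_iff.2 ⟨?_, ?_⟩, isSimulation_iff.2 ⟨?_, ?_⟩⟩
  · rintro (a | b) (a' | b') h <;> first | exact h.elim | exact hpt _ _ h
  · rintro (a | b) (a' | b') hab (a'' | b'') h <;> try exact hab.elim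
    · exact (hfwd a b' hab a'' h).trans_eq
        (homToSet_sum_inr b' {z | _root_.sumRel R (.inl a'') z} _).symm
    · exact (cast_bot _ _).trans_le bot_le
  · rintro (a | b) (a' | b') h <;> first | exact h.elim | exact (hpt _ _ h).symm
  · rintro (a | b) (a' | b') hab (a'' | b'') h <;> try exact hab.elim
    · exact (cast_bot _ _).trans_le bot_le
    · exact (hbwd b a' hab b'' h).trans_eq
        (homToSet_sum_inl a' {z | _root_.sumRel R z (.inr b'')} _).symm

lemma IsBisimulation.isSimulation_eqvGen {X : VCat V} {S : X.Obj → X.Obj → Prop}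
    (hS : IsBisimulation V X X S) : IsSimulation V X X (EqvGen S) := by
  rw [← EqvGen.reflTransGen_symmGen]
  exact hS.isSimulation_symmGen.reflTransGen

lemma isSimulation_of_cospan {A B C : VCat V} (p : VFunctor V A C) {q : VFunctor V B C}
    (hq : q.IsFunctionalBisimulation) : IsSimulation V A B fun a b => p.toFun a = q.toFun b := by
  have hpt : ∀ a b, p.toFun a = q.toFun b → A.pt a = B.pt b := fun a b h =>
    (p.pt_eq a).symm.trans ((congrArg C.pt h).trans (q.pt_eq b))
  refine isSimulation_iff.2 ⟨hpt, fun a b hab a' h => ?_⟩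
  have hqb : ∀ c, c = q.toFun b →
      ∀ (h₁ : C.pt c = B.pt b) (h₂ : C.pt (p.toFun a') = A.pt a'),
        V.cast h₁ h₂ (C.hom c (p.toFun a')) =
          B.homToSet b {b' | q.toFun b' = p.toFun a'} (A.pt a') := by
    rintro _ rfl h₁ h₂
    rw [← cast_homToSet h₂, ← hq b]
    simp
  calc V.cast h rfl (A.hom a a')
      = V.cast ((p.pt_eq a).trans (hpt a b hab)) (p.pt_eq a')
          (V.cast (p.pt_eq a).symm (p.pt_eq a').symm (A.hom a a')) := by simp
    _ ≤ V.cast _ _ (C.hom (p.toFun a) (p.toFun a')) := cast_mono _ _ (p.map_le a a')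
    _ = B.homToSet b {b' | q.toFun b' = p.toFun a'} (A.pt a') := hqb _ hab _ _
    _ ≤ B.homToSet b {b' | p.toFun a' = q.toFun b'} (A.pt a') := homToSet_mono fun _ => Eq.symm

lemma isBisimulation_of_cospan {A B C : VCat V} {p : VFunctor V A C} {q : VFunctor V B C}
    (hp : p.IsFunctionalBisimulation) (hq : q.IsFunctionalBisimulation) :
    IsBisimulation V A B fun a b => p.toFun a = q.toFun b :=
  ⟨isSimulation_of_cospan p hq, by simpa only [eq_comm] using isSimulation_of_cospan q hp⟩

/-- `A` and `B` are bisimilar iff there is a cospan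
`A → C ← B` of surjective functional bisimulations. -/
theorem bisimilar_iff_cospan (V : Quantaloid) (A B : VCat V) :
    Bisimilar V A B ↔
      ∃ (C : VCat V) (p : VFunctor V A C) (q : VFunctor V B C),
        p.IsSFB ∧ q.IsSFB := by
  constructor
  · rintro ⟨R, hR, hA, hB⟩
    have hE : IsSimulation V (A.sum B) (A.sum B) (EqvGen.setoid (sumRel R)) :=
      hR.sumRel.isSimulation_eqvGen
    let π := (A.sum B).quotientMk _ hE
    have hπ : π.IsFunctionalBisimulation := (A.sum B).isFunctionalBisimulation_quotientMk _ hE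
    refine ⟨_, π.comp .inl, π.comp .inr, ?_, ?_⟩
    · exact (VFunctor.isSFB_iff _).2 ⟨surjective_mk_inl hB, hπ.comp_inl⟩
    · exact (VFunctor.isSFB_iff _).2 ⟨surjective_mk_inr hA, hπ.comp_inr⟩
  · rintro ⟨C, p, q, hp, hq⟩
    rw [VFunctor.isSFB_iff] at hp hq
    exact ⟨_, isBisimulation_of_cospan hp.2 hq.2,
      fun a => (hq.1 (p.toFun a)).imp fun _ => Eq.symm, fun b => hp.1 (q.toFun b)⟩
end

section
/- If V is a locally distributive quantaloid (each hom-lattice V(u,v) is a frame, i.e. binary meets distribute over arbitrary joins), then surjective functional bisimulations are stable under pullback: in a pullback square with bottom F : A → C and right leg G : B → C a surjective functional bisimulation, the projection A ∧_C B → A is a surjective functional bisimulation. -/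
theorem Quantaloid.cast_cast_s9 (V : Quantaloid) {u u' u'' v v' v'' : V.Obj}
    (h1 : u = u') (h2 : v = v') (h3 : u' = u'') (h4 : v' = v'') (f : V.Hom u v) :
    V.cast h3 h4 (V.cast h1 h2 f) = V.cast (h1.trans h3) (h2.trans h4) f := by
  subst h1; subst h2; subst h3; subst h4; rfl

theorem Quantaloid.cast_inf (V : Quantaloid) {u u' v v' : V.Obj}
    (h1 : u = u') (h2 : v = v') (f g : V.Hom u v) :
    V.cast h1 h2 (f ⊓ g) = V.cast h1 h2 f ⊓ V.cast h1 h2 g := by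
  subst h1; subst h2; rfl

theorem Quantaloid.cast_sSup_s9 (V : Quantaloid) {u u' v v' : V.Obj}
    (h1 : u = u') (h2 : v = v') (S : Set (V.Hom u v)) :
    V.cast h1 h2 (sSup S) = sSup (V.cast h1 h2 '' S) := by
  subst h1; subst h2
  rw [show (V.cast rfl rfl : V.Hom u v → V.Hom u v) = fun x => x from rfl, Set.image_id']

theorem Quantaloid.cast_le_iff_s9 (V : Quantaloid) {u u' v v' : V.Obj}
    (h1 : u = u') (h2 : v = v') (f : V.Hom u v) (g : V.Hom u' v') :
    V.cast h1 h2 f ≤ g ↔ f ≤ V.cast h1.symm h2.symm g := by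
  subst h1; subst h2; exact Iff.rfl

theorem VCat.cast_hom_eq {V : Quantaloid} (A : VCat V) {a a' c c' : A.Obj}
    (h1 : a = a') (h2 : c = c') {u v : V.Obj}
    (hu : A.pt a = u) (hv : A.pt c = v) (hu' : A.pt a' = u) (hv' : A.pt c' = v) :
    V.cast hu hv (A.hom a c) = V.cast hu' hv' (A.hom a' c') := by
  subst h1; subst h2; rfl

/-- if `V` is locally distributive, surjective functional
bisimulations are stable under pullback. -/
theorem sfb_stable_under_pullback (V : Quantaloid)
    (hdist : ∀ (u v : V.Obj) (x : V.Hom u v) (S : Set (V.Hom u v)),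
      x ⊓ sSup S = ⨆ y ∈ S, x ⊓ y)
    (A B C : VCat V) (F : VFunctor V A C) (G : VFunctor V B C)
    (hG : G.IsSFB)
    (P : VCat V)
    (e : P.Obj ≃ {x : A.Obj × B.Obj // A.pt x.1 = B.pt x.2 ∧ F.toFun x.1 = G.toFun x.2})
    (hpt : ∀ p, P.pt p = A.pt (e p).1.1)
    (hhom : ∀ p q : P.Obj,
      P.hom p q = V.cast (hpt p).symm (hpt q).symm
        (A.hom (e p).1.1 (e q).1.1 ⊓
          V.cast (e p).2.1.symm (e q).2.1.symm (B.hom (e p).1.2 (e q).1.2)))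
    (π₁ : VFunctor V P A) (hπ₁ : ∀ p, π₁.toFun p = (e p).1.1) :
    π₁.IsSFB := by
  constructor
  · -- surjectivity
    intro a
    obtain ⟨b, hb⟩ := hG.1 (F.toFun a)
    have hptab : A.pt a = B.pt b :=
      (F.pt_eq a).symm.trans ((congrArg C.pt hb.symm).trans (G.pt_eq b))
    refine ⟨e.symm ⟨(a, b), hptab, hb.symm⟩, ?_⟩
    rw [hπ₁, Equiv.apply_symm_apply]
  · intro p b
    have hab : A.pt (e p).1.1 = B.pt (e p).1.2 := (e p).2.1
    have hFG : F.toFun (e p).1.1 = G.toFun (e p).1.2 := (e p).2.2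
    have κ1 : B.pt (e p).1.2 = A.pt (π₁.toFun p) :=
      hab.symm.trans (congrArg A.pt (hπ₁ p).symm)
    have ptb' : ∀ (b' : B.Obj), G.toFun b' = F.toFun b → B.pt b' = A.pt b :=
      fun b' h => (G.pt_eq b').symm.trans ((congrArg C.pt h).trans (F.pt_eq b))
    set M' : Set (V.Hom (A.pt (π₁.toFun p)) (A.pt b)) :=
      {x | ∃ (b' : B.Obj) (h : G.toFun b' = F.toFun b),
        x = V.cast κ1 (ptb' b' h) (B.hom (e p).1.2 b')} with hM'
    have key : ∀ (q : P.Obj) (hq : π₁.toFun q = b),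
        V.cast (π₁.pt_eq p).symm ((π₁.pt_eq q).symm.trans (congrArg A.pt hq)) (P.hom p q)
          = A.hom (π₁.toFun p) b ⊓
            V.cast κ1
              (ptb' (e q).1.2 ((e q).2.2.symm.trans (congrArg F.toFun ((hπ₁ q).symm.trans hq))))
              (B.hom (e p).1.2 (e q).1.2) := by
      intro q hq
      rw [hhom p q, V.cast_cast_s9, V.cast_inf, V.cast_cast_s9]
      congr 1
      exact VCat.cast_hom_eq A (hπ₁ p).symm ((hπ₁ q).symm.trans hq) _ _ rfl rfl
    have hT : {x : V.Hom (A.pt (π₁.toFun p)) (A.pt b) |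
          ∃ (q : P.Obj) (h : π₁.toFun q = b),
            x = V.cast (π₁.pt_eq p).symm ((π₁.pt_eq q).symm.trans (congrArg A.pt h))
              (P.hom p q)}
        = (fun y => A.hom (π₁.toFun p) b ⊓ y) '' M' := by
      ext x
      simp only [Set.mem_setOf_eq, Set.mem_image, hM']
      constructor
      · rintro ⟨q, hq, rfl⟩
        exact ⟨_, ⟨(e q).1.2,
          (e q).2.2.symm.trans (congrArg F.toFun ((hπ₁ q).symm.trans hq)), rfl⟩,
          (key q hq).symm⟩
      · rintro ⟨y, ⟨b', hGb', rfl⟩, rfl⟩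
        have hptb : A.pt b = B.pt b' := (ptb' b' hGb').symm
        set q := e.symm ⟨(b, b'), hptb, hGb'.symm⟩ with hqdef
        have heq : e q = ⟨(b, b'), hptb, hGb'.symm⟩ := e.apply_symm_apply _
        have hq : π₁.toFun q = b := (hπ₁ q).trans (congrArg (fun z => z.1.1) heq)
        refine ⟨q, hq, ?_⟩
        rw [key q hq]
        congr 1
        exact VCat.cast_hom_eq B rfl ((congrArg (fun z => z.1.2) heq)).symm _ _ _ _
    rw [hT, sSup_image, ← hdist]
    have hle : A.hom (π₁.toFun p) b ≤ sSup M' := by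
      have hGsup := hG.2 (e p).1.2 (F.toFun b)
      have hmap := F.map_le (π₁.toFun p) b
      have hFπ : F.toFun (π₁.toFun p) = G.toFun (e p).1.2 :=
        (congrArg F.toFun (hπ₁ p)).trans hFG
      have h2 : C.hom (F.toFun (π₁.toFun p)) (F.toFun b)
          = V.cast (congrArg C.pt hFπ.symm) rfl (C.hom (G.toFun (e p).1.2) (F.toFun b)) :=
        (VCat.cast_hom_eq C hFπ.symm rfl _ rfl rfl rfl).symm
      have step := (V.cast_le_iff_s9 _ _ _ _).mp (le_trans hmap (le_of_eq h2))
      rw [V.cast_cast_s9, hGsup, V.cast_sSup_s9] at step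
      refine le_trans step (sSup_le_sSup ?_)
      rintro _ ⟨x, ⟨b'', hb'', rfl⟩, rfl⟩
      refine ⟨b'', hb'', ?_⟩
      rw [V.cast_cast_s9]
    exact (inf_eq_left.mpr hle).symm
end

section
/- For any V-functor f : A → B between V-categories over a quantaloid V, the induced 2-functor V(f) : V(A) → V(B) between the slice quantaloids is a left adjoint in Caten: each component V(f)_{a,b} : V(a_+,b_+)↓A(a,b) → V(a_+,b_+)↓B(fa,fb) (the inclusion) has a right adjoint G_{a,b} sending y ≤ B(fa,fb) to y ∧ A(a,b), and these right adjoints satisfy the lax-functoriality conditions G_{a,b}(x) ⊗ G_{b,c}(y) ≤ G_{a,c}(x ⊗ y) and id_{a_+} ≤ G_{a,a}(id_{a_+}). -/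
section Helpers

variable (V : Quantaloid)

lemma Quantaloid.cast_le_cast {u u' v v' : V.Obj} (hu : u = u') (hv : v = v')
    {x y : V.Hom u v} (h : x ≤ y) : V.cast hu hv x ≤ V.cast hu hv y := by
  subst hu; subst hv; exact h

lemma Quantaloid.cast_le_iff_s19 {u u' v v' : V.Obj} (hu : u = u') (hv : v = v')
    (x : V.Hom u v) (y : V.Hom u' v') :
    V.cast hu hv x ≤ y ↔ x ≤ V.cast hu.symm hv.symm y := by
  subst hu; subst hv; rfl

lemma Quantaloid.cast_cast_s19 {u u' v v' : V.Obj} (hu : u = u') (hv : v = v')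
    (x : V.Hom u' v') :
    V.cast hu hv (V.cast hu.symm hv.symm x) = x := by
  subst hu; subst hv; rfl

lemma Quantaloid.cast_comp {u u' v v' w w' : V.Obj} (hu : u = u') (hv : v = v')
    (hw : w = w') (x : V.Hom u v) (y : V.Hom v w) :
    V.cast hu hw (V.comp x y) = V.comp (V.cast hu hv x) (V.cast hv hw y) := by
  subst hu; subst hv; subst hw; rfl

lemma Quantaloid.cast_id {u u' : V.Obj} (hu : u = u') :
    V.cast hu hu (V.id u) = V.id u' := by
  subst hu; rfl

lemma Quantaloid.comp_mono {u v w : V.Obj} {x x' : V.Hom u v} {y y' : V.Hom v w}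
    (hx : x ≤ x') (hy : y ≤ y') : V.comp x y ≤ V.comp x' y' := by
  have h1 : V.comp x y ≤ V.comp x' y := by
    have : V.comp (sSup {x, x'}) y = sSup ((fun f => V.comp f y) '' {x, x'}) :=
      V.comp_sSup_left _ _
    rw [sSup_pair, sup_eq_right.mpr hx] at this
    rw [Set.image_pair, sSup_pair] at this
    rw [this]; exact le_sup_left
  have h2 : V.comp x' y ≤ V.comp x' y' := by
    have : V.comp x' (sSup {y, y'}) = sSup ((fun g => V.comp x' g) '' {y, y'}) :=
      V.comp_sSup_right _ _
    rw [sSup_pair, sup_eq_right.mpr hy] at this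
    rw [Set.image_pair, sSup_pair] at this
    rw [this]; exact le_sup_left
  exact h1.trans h2

end Helpers

/-- for a `V`-functor `f : A → B`, the induced map `V(f)` between
slice quantaloids is a left adjoint in `Caten`: each inclusion
`V(a₊,b₊)↓A(a,b) → V(a₊,b₊)↓B(fa,fb)` has right adjoint `y ↦ y ∧ A(a,b)`, and
these right adjoints are laxly functorial. -/
theorem slice_functor_left_adjoint (V : Quantaloid) (A B : VCat V)
    (f : VFunctor V A B) :
    -- the local Galois connections: inclusion ⊣ (y ↦ y ∧ A(a,b))
    (∀ (a b : A.Obj) (x : V.Hom (A.pt a) (A.pt b))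
        (y : V.Hom (B.pt (f.toFun a)) (B.pt (f.toFun b))),
      x ≤ A.hom a b → y ≤ B.hom (f.toFun a) (f.toFun b) →
      (V.cast (f.pt_eq a).symm (f.pt_eq b).symm x ≤ y ↔
        x ≤ V.cast (f.pt_eq a) (f.pt_eq b) y ⊓ A.hom a b)) ∧
    -- lax functoriality: G(x) ⊗ G(y) ≤ G(x ⊗ y)
    (∀ (a b c : A.Obj) (x : V.Hom (B.pt (f.toFun a)) (B.pt (f.toFun b)))
        (y : V.Hom (B.pt (f.toFun b)) (B.pt (f.toFun c))),
      x ≤ B.hom (f.toFun a) (f.toFun b) → y ≤ B.hom (f.toFun b) (f.toFun c) →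
      V.comp (V.cast (f.pt_eq a) (f.pt_eq b) x ⊓ A.hom a b)
             (V.cast (f.pt_eq b) (f.pt_eq c) y ⊓ A.hom b c) ≤
        V.cast (f.pt_eq a) (f.pt_eq c) (V.comp x y) ⊓ A.hom a c) ∧
    -- lax unit: id ≤ G(id)
    (∀ a : A.Obj,
      V.id (A.pt a) ≤
        V.cast (f.pt_eq a) (f.pt_eq a) (V.id (B.pt (f.toFun a))) ⊓ A.hom a a) := by
  refine ⟨?_, ?_, ?_⟩
  · intro a b x y hx hy
    rw [V.cast_le_iff_s19, le_inf_iff]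
    exact ⟨fun h => ⟨h, hx⟩, fun h => h.1⟩
  · intro a b c x y hx hy
    refine le_inf ?_ ?_
    · rw [V.cast_comp (f.pt_eq a) (f.pt_eq b) (f.pt_eq c)]
      exact V.comp_mono inf_le_left inf_le_left
    · exact (V.comp_mono inf_le_right inf_le_right).trans (A.comp_le a b c)
  · intro a
    rw [V.cast_id (f.pt_eq a)]
    exact le_inf le_rfl (A.id_le a)
end
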